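/- arXiv:math/0407399 — 6 statements merged into one kernel-verified Lean document; each statement's English description precedes it below -/
import Mathlib

section
/- Property v) of a skew-symmetric Courant algebroid implies the Leibniz rule iv): [e₁, f e₂] = f[e₁,e₂] + ((ρe₁)f)e₂ − g(e₁,e₂)∂f; and properties i) and iv) together imply ii): g(∂f, ∂h) = 0 for all functions f, h. -/
/-- For a pseudo-Euclidean module `(E,g)` over a commutative ℝ-algebra `A` with anchor
`ρ : E → Der(A)`, `∂ = par : A → E` with `g(∂f,e) = (1/2)(ρe)f`, and a skew-symmetric
ℝ-bilinear bracket: property v) implies the Leibniz rule iv)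
`[e₁, f e₂] = f[e₁,e₂] + ((ρe₁)f)e₂ − g(e₁,e₂)∂f`; and (given sections with invertible
pairing) properties i) and iv) together imply ii) `g(∂f, ∂h) = 0`. -/
theorem skew_courant_v_implies_iv_and_i_iv_implies_ii
    {A : Type*} [CommRing A] [Algebra ℝ A]
    {E : Type*} [AddCommGroup E] [Module A E] [Module ℝ E] [IsScalarTower ℝ A E]
    (g : E →ₗ[A] E →ₗ[A] A)
    (g_symm : ∀ e₁ e₂, g e₁ e₂ = g e₂ e₁)
    (g_nondeg : ∀ e, (∀ e', g e e' = 0) → e = 0)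
    (ρ : E →ₗ[A] Derivation ℝ A A)
    (par : A → E)
    (par_add : ∀ f h, par (f + h) = par f + par h)
    (par_smul : ∀ (r : ℝ) (f : A), par (r • f) = r • par f)
    (g_par : ∀ (f : A) (e : E), g (par f) e = (1/2 : ℝ) • (ρ e f))
    (br : E → E → E)
    (br_add_left : ∀ e₁ e₂ e₃, br (e₁ + e₂) e₃ = br e₁ e₃ + br e₂ e₃)
    (br_add_right : ∀ e₁ e₂ e₃, br e₁ (e₂ + e₃) = br e₁ e₂ + br e₁ e₃)
    (br_smul : ∀ (r : ℝ) e₁ e₂, br (r • e₁) e₂ = r • br e₁ e₂)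
    (br_skew : ∀ e₁ e₂, br e₁ e₂ = - br e₂ e₁)
    (hv : ∀ e e₁ e₂, ρ e (g e₁ e₂)
      = g (br e e₁ + par (g e e₁)) e₂ + g e₁ (br e e₂ + par (g e e₂))) :
    (∀ (e₁ e₂ : E) (f : A),
        br e₁ (f • e₂) = f • br e₁ e₂ + (ρ e₁ f) • e₂ - (g e₁ e₂) • par f) ∧
    ((∃ e₁ e₂ : E, IsUnit (g e₁ e₂)) →
      (∀ e₁ e₂, ρ (br e₁ e₂) = ⁅ρ e₁, ρ e₂⁆) →
      ∀ f h : A, g (par f) (par h) = 0) := by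
  -- ∂ satisfies a Leibniz-type rule after pairing with g
  have par_mul : ∀ (f k : A) (e : E),
      g (par (f * k)) e = f * g (par k) e + k * g (par f) e := by
    intro f k e
    rw [g_par, g_par, g_par, Derivation.leibniz]
    rw [smul_add, smul_comm (1/2 : ℝ) f, smul_comm (1/2 : ℝ) k]
    simp [smul_eq_mul]
  -- Part 1: the Leibniz rule iv)
  have hiv : ∀ (e₁ e₂ : E) (f : A),
      br e₁ (f • e₂) = f • br e₁ e₂ + (ρ e₁ f) • e₂ - (g e₁ e₂) • par f := by
    intro e₁ e₂ f
    rw [← sub_eq_zero]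
    apply g_nondeg
    intro c
    have h1 := hv e₁ c (f • e₂)
    have h2 := hv e₁ c e₂
    have h3 := par_mul f (g e₁ e₂) c
    have hL : ρ e₁ (f * g c e₂) = f * ρ e₁ (g c e₂) + (g c e₂) * ρ e₁ f := by
      rw [Derivation.leibniz]; simp [smul_eq_mul]
    simp only [map_smul, map_add, map_sub, LinearMap.add_apply, LinearMap.sub_apply,
      LinearMap.smul_apply, smul_eq_mul] at h1 h2 ⊢
    linear_combination (f * h2 + hL - h1) - h3 + g_symm (br e₁ (f • e₂)) c
      - f * g_symm (br e₁ e₂) c - (ρ e₁ f) * g_symm e₂ c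
      + g_symm (par (f * g e₁ e₂)) c - f * g_symm (par (g e₁ e₂)) c
  refine ⟨hiv, ?_⟩
  -- Part 2
  rintro ⟨a, b, hab⟩ hi f h
  -- first: ρ (par f) = 0 for all f
  have hrho : ∀ (f x : A), ρ (par f) x = 0 := by
    intro f x
    have h1 : ρ (br a (f • b)) = ρ (f • br a b + (ρ a f) • b - (g a b) • par f) := by
      rw [hiv a b f]
    rw [hi a (f • b), map_sub, map_add, map_smul, map_smul, map_smul, hi a b] at h1
    have h2 := congrArg (fun D : Derivation ℝ A A => D x) h1
    simp only [Derivation.commutator_apply, Derivation.coe_smul, Pi.smul_apply,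
      Derivation.add_apply, Derivation.sub_apply, Derivation.smul_apply,
      smul_eq_mul] at h2
    have hL : ρ a (f * ρ b x) = f * ρ a (ρ b x) + (ρ b x) * ρ a f := by
      rw [Derivation.leibniz]; simp [smul_eq_mul]
    have hs : (ρ ((g a) b • par f)) x = (g a) b * (ρ (par f)) x := by
      rw [map_smul]; simp [smul_eq_mul]
    have key : g a b * ρ (par f) x = 0 := by linear_combination h2 - hL - hs
    exact hab.mul_right_eq_zero.mp key
  rw [g_par, hrho h f, smul_zero]
end

section
/- Given a pre-Courant algebroid (E,g,ρ,[,]), a modified bracket [e₁,e₂]' = [e₁,e₂] + λ(e₁,e₂) again satisfies properties i) and v) of a pre-Courant algebroid if and only if ρ∘λ = 0 and Λ(e₁,e₂,e₃) = g(λ(e₁,e₂),e₃) is totally skew-symmetric. -/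
/-- A pre-Courant algebroid over a commutative ℝ-algebra `A`: a pseudo-Euclidean
`A`-module `(E, g)` with anchor `ρ : E → Der(A)`, operator `∂ = par : A → E` with
`g(∂f, e) = (1/2)(ρ e) f`, and a skew-symmetric ℝ-bilinear bracket satisfying
property i) `ρ[e₁,e₂] = [ρe₁,ρe₂]` and property v) (metric invariance). -/
structure PreCourantAlgebroid (A : Type*) [CommRing A] [Algebra ℝ A]
    (E : Type*) [AddCommGroup E] [Module A E] [Module ℝ E] [IsScalarTower ℝ A E] where
  g : E →ₗ[A] E →ₗ[A] A
  g_symm : ∀ e₁ e₂, g e₁ e₂ = g e₂ e₁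
  g_nondeg : ∀ e, (∀ e', g e e' = 0) → e = 0
  ρ : E →ₗ[A] Derivation ℝ A A
  par : A → E
  par_add : ∀ f h, par (f + h) = par f + par h
  par_smul : ∀ (r : ℝ) (f : A), par (r • f) = r • par f
  g_par : ∀ (f : A) (e : E), g (par f) e = (1/2 : ℝ) • (ρ e f)
  bracket : E → E → E
  bracket_add_left : ∀ e₁ e₂ e₃, bracket (e₁ + e₂) e₃ = bracket e₁ e₃ + bracket e₂ e₃
  bracket_add_right : ∀ e₁ e₂ e₃, bracket e₁ (e₂ + e₃) = bracket e₁ e₂ + bracket e₁ e₃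
  bracket_smul_left : ∀ (r : ℝ) e₁ e₂, bracket (r • e₁) e₂ = r • bracket e₁ e₂
  bracket_skew : ∀ e₁ e₂, bracket e₁ e₂ = - bracket e₂ e₁
  anchor_bracket : ∀ e₁ e₂, ρ (bracket e₁ e₂) = ⁅ρ e₁, ρ e₂⁆
  invariance : ∀ e e₁ e₂, ρ e (g e₁ e₂)
    = g (bracket e e₁ + par (g e e₁)) e₂ + g e₁ (bracket e e₂ + par (g e e₂))

/-- Given a pre-Courant algebroid `(E,g,ρ,[,])` and an `A`-bilinear skew-symmetric map
`λ : E × E → E`, the modified bracket `[e₁,e₂]' = [e₁,e₂] + λ(e₁,e₂)` again satisfies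
properties i) and v) of a pre-Courant algebroid if and only if `ρ∘λ = 0` and
`Λ(e₁,e₂,e₃) = g(λ(e₁,e₂),e₃)` is totally skew-symmetric. -/
theorem preCourant_modified_bracket_iff {A : Type*} [CommRing A] [Algebra ℝ A]
    {E : Type*} [AddCommGroup E] [Module A E] [Module ℝ E] [IsScalarTower ℝ A E]
    (C : PreCourantAlgebroid A E)
    (lam : E →ₗ[A] E →ₗ[A] E)
    (lam_skew : ∀ e₁ e₂, lam e₁ e₂ = - lam e₂ e₁)
    (br' : E → E → E)
    (hbr' : ∀ e₁ e₂, br' e₁ e₂ = C.bracket e₁ e₂ + lam e₁ e₂) :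
    ((∀ e₁ e₂, C.ρ (br' e₁ e₂) = ⁅C.ρ e₁, C.ρ e₂⁆) ∧
     (∀ e e₁ e₂, C.ρ e (C.g e₁ e₂)
        = C.g (br' e e₁ + C.par (C.g e e₁)) e₂ + C.g e₁ (br' e e₂ + C.par (C.g e e₂))))
    ↔ ((∀ e₁ e₂, C.ρ (lam e₁ e₂) = 0) ∧
       (∀ e₁ e₂ e₃, C.g (lam e₁ e₂) e₃ = - C.g (lam e₁ e₃) e₂)) := by
  constructor
  · rintro ⟨h1, h2⟩
    constructor
    · intro e₁ e₂
      have h := h1 e₁ e₂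
      rw [hbr', map_add, C.anchor_bracket] at h
      exact add_eq_left.mp h
    · intro e₁ e₂ e₃
      have h := h2 e₁ e₂ e₃
      have h0 := C.invariance e₁ e₂ e₃
      rw [hbr', hbr'] at h
      simp only [map_add, LinearMap.add_apply] at h h0
      linear_combination h0 - h - C.g_symm e₂ (lam e₁ e₃)
  · rintro ⟨h1, h2⟩
    constructor
    · intro e₁ e₂
      rw [hbr', map_add, C.anchor_bracket, h1, add_zero]
    · intro e e₁ e₂
      have h0 := C.invariance e e₁ e₂
      rw [hbr', hbr']
      simp only [map_add, LinearMap.add_apply] at h0 ⊢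
      linear_combination h0 - h2 e e₁ e₂ - C.g_symm e₁ (lam e e₂)
end

section
/- Let (E,g) carry a metric connection ∇ and anchor ρ. Then the bracket [e₁,e₂]₀ = ∇_{ρe₁}e₂ − ∇_{ρe₂}e₁ − γ(e₁,e₂), where γ is defined by g(γ(e₁,e₂),e) = (1/2)[g(e₁, ∇_{ρe}e₂) − g(e₂, ∇_{ρe}e₁)] for all e, is skew-symmetric and satisfies the metric invariance property v): (ρe)(g(e₁,e₂)) = g([e,e₁]₀+∂g(e,e₁), e₂) + g(e₁, [e,e₂]₀+∂g(e,e₂)). -/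
/-- Let `(E,g)` be a pseudo-Euclidean module over a commutative ℝ-algebra `A` with a
metric connection `∇ = D` over the derivations of `A` and an anchor `ρ`. Then the
bracket `[e₁,e₂]₀ = ∇_{ρe₁}e₂ − ∇_{ρe₂}e₁ − γ(e₁,e₂)`, where
`g(γ(e₁,e₂),e) = (1/2)[g(e₁,∇_{ρe}e₂) − g(e₂,∇_{ρe}e₁)]`, is skew-symmetric and
satisfies the metric invariance property v). -/
theorem metric_connection_bracket_invariance
    {A : Type*} [CommRing A] [Algebra ℝ A]
    {E : Type*} [AddCommGroup E] [Module A E] [Module ℝ E] [IsScalarTower ℝ A E]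
    (g : E →ₗ[A] E →ₗ[A] A)
    (g_symm : ∀ e₁ e₂, g e₁ e₂ = g e₂ e₁)
    (g_nondeg : ∀ e, (∀ e', g e e' = 0) → e = 0)
    (ρ : E →ₗ[A] Derivation ℝ A A)
    (par : A → E)
    (par_add : ∀ f h, par (f + h) = par f + par h)
    (par_smul : ∀ (r : ℝ) (f : A), par (r • f) = r • par f)
    (g_par : ∀ (f : A) (e : E), g (par f) e = (1/2 : ℝ) • (ρ e f))
    (D : Derivation ℝ A A → E → E)
    (D_add_X : ∀ X Y e, D (X + Y) e = D X e + D Y e)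
    (D_smul_X : ∀ (f : A) X e, D (f • X) e = f • D X e)
    (D_add_e : ∀ X e₁ e₂, D X (e₁ + e₂) = D X e₁ + D X e₂)
    (D_smul_e : ∀ X (f : A) e, D X (f • e) = f • D X e + (X f) • e)
    (D_metric : ∀ X e₁ e₂, X (g e₁ e₂) = g (D X e₁) e₂ + g e₁ (D X e₂))
    (γ : E → E → E)
    (hγ : ∀ e₁ e₂ e, g (γ e₁ e₂) e
      = (1/2 : ℝ) • (g e₁ (D (ρ e) e₂) - g e₂ (D (ρ e) e₁)))
    (br₀ : E → E → E)
    (hbr₀ : ∀ e₁ e₂, br₀ e₁ e₂ = D (ρ e₁) e₂ - D (ρ e₂) e₁ - γ e₁ e₂)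
    :
    (∀ e₁ e₂, br₀ e₁ e₂ = - br₀ e₂ e₁) ∧
    (∀ e e₁ e₂, ρ e (g e₁ e₂)
      = g (br₀ e e₁ + par (g e e₁)) e₂ + g e₁ (br₀ e e₂ + par (g e e₂))) := by
  have hγskew : ∀ e₁ e₂, γ e₂ e₁ = - γ e₁ e₂ := by
    intro e₁ e₂
    have h : γ e₁ e₂ + γ e₂ e₁ = 0 := by
      apply g_nondeg
      intro e'
      rw [map_add, LinearMap.add_apply, hγ, hγ]
      module
    exact eq_neg_of_add_eq_zero_right h
  constructor
  · intro e₁ e₂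
    rw [hbr₀, hbr₀, hγskew e₁ e₂]
    abel
  · intro e e₁ e₂
    have m : ρ e (g e₁ e₂) = g (D (ρ e) e₁) e₂ + g e₁ (D (ρ e) e₂) := D_metric _ _ _
    have m1 : ρ e₁ (g e e₂) = g (D (ρ e₁) e) e₂ + g e (D (ρ e₁) e₂) := D_metric _ _ _
    have m2 : ρ e₂ (g e e₁) = g (D (ρ e₂) e) e₁ + g e (D (ρ e₂) e₁) := D_metric _ _ _
    rw [hbr₀, hbr₀]
    simp only [map_add, map_sub, LinearMap.add_apply, LinearMap.sub_apply]
    rw [g_symm e₁ (γ e e₂), g_symm e₁ (par (g e e₂)), hγ, hγ, g_par, g_par, m, m1, m2,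
      g_symm e₂ (D (ρ e₁) e), g_symm e₁ (D (ρ e₂) e)]
    module
end

section
/- The Ševera–Weinstein bracket, obtained from the Courant bracket on TM ⊕ T*M by adding i(X∧Y)Φ to the T*M-component for a 3-form Φ, satisfies the Jacobi-type property iii) of a skew-symmetric Courant algebroid if and only if dΦ = 0. -/
/-!
Write `p = X ⊕ α`, `q = Y ⊕ β`, `r = Z ⊕ γ`. The `TM`-component of the Jacobiator of `[·,·]_Φ`
is the Jacobiator of vector fields, hence zero. On the `T*M`-side, `[[p, q]_Φ, r]_Φ` differs from
`[[p, q], r]` by `i([X,Y]∧Z)Φ − L_Z i(X∧Y)Φ + ½ d(Φ(X,Y,Z))`, while the cyclic pairing `T` gains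
`(3/2) Φ(X,Y,Z)`. Courant's theorem `Jac = (1/3) ∂T` for the untwisted bracket and the Koszul
formula then leave exactly `Jac_Φ − (1/3) ∂T_Φ = −i(X∧Y∧Z) dΦ`, which vanishes for all
`X, Y, Z` iff `dΦ = 0`.
-/

open scoped Manifold

section CartanCalculus
variable {A : Type*} [CommRing A] [Algebra ℝ A]

lemma Derivation.commutator_smul_right (X Z : Derivation ℝ A A) (f : A) :
    ⁅X, f • Z⁆ = f • ⁅X, Z⁆ + (X f) • Z := by
  ext a
  simp only [Derivation.commutator_apply, Derivation.smul_apply, Derivation.add_apply,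
    smul_eq_mul, Derivation.leibniz]
  ring

/-- The differential `df` of a function, as an `A`-linear form on derivations. -/
noncomputable def dF (f : A) : Derivation ℝ A A →ₗ[A] A where
  toFun Z := Z f
  map_add' Z W := by simp
  map_smul' g Z := by simp

/-- The Lie derivative `L_X β` of a `1`-form `β` along a vector field `X`. -/
noncomputable def lieDer (X : Derivation ℝ A A) (β : Derivation ℝ A A →ₗ[A] A) :
    Derivation ℝ A A →ₗ[A] A where
  toFun Z := X (β Z) - β ⁅X, Z⁆
  map_add' Z W := by simp only [map_add, lie_add]; ring
  map_smul' f Z := by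
    simp only [map_smul, smul_eq_mul, Derivation.leibniz, RingHom.id_apply,
      Derivation.commutator_smul_right, map_add, map_smul]
    ring

/-- The interior product `i(Y)(dα)` for a `1`-form `α` and vector field `Y`. -/
noncomputable def iotaD (Y : Derivation ℝ A A) (α : Derivation ℝ A A →ₗ[A] A) :
    Derivation ℝ A A →ₗ[A] A where
  toFun Z := Y (α Z) - Z (α Y) - α ⁅Y, Z⁆
  map_add' Z W := by simp only [map_add, add_lie, lie_add, Derivation.add_apply]; ring
  map_smul' f Z := by
    simp only [map_smul, smul_eq_mul, Derivation.leibniz, RingHom.id_apply,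
      Derivation.commutator_smul_right, map_add, map_smul, Derivation.smul_apply]
    ring

/-- The neutral pairing on `TM ⊕ T*M`: `g(X⊕α, Y⊕β) = (1/2)(β(X) + α(Y))`. -/
noncomputable def genPairing
    (p q : Derivation ℝ A A × (Derivation ℝ A A →ₗ[A] A)) : A :=
  (1/2 : ℝ) • (q.2 p.1 + p.2 q.1)

/-- The Dorfman product `(X⊕α)⋆(Y⊕β) = [X,Y] ⊕ (L_X β − i(Y)dα)`. -/
noncomputable def dorfman
    (p q : Derivation ℝ A A × (Derivation ℝ A A →ₗ[A] A)) :
    Derivation ℝ A A × (Derivation ℝ A A →ₗ[A] A) :=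
  (⁅p.1, q.1⁆, lieDer p.1 q.2 - iotaD q.1 p.2)

/-- The Courant bracket `[X⊕α, Y⊕β] = [X,Y] ⊕ (L_X β − L_Y α − (1/2)d(β(X) − α(Y)))`. -/
noncomputable def courantBracket
    (p q : Derivation ℝ A A × (Derivation ℝ A A →ₗ[A] A)) :
    Derivation ℝ A A × (Derivation ℝ A A →ₗ[A] A) :=
  (⁅p.1, q.1⁆, lieDer p.1 q.2 - lieDer q.1 p.2 - (1/2 : ℝ) • dF (q.2 p.1 - p.2 q.1))

end CartanCalculus

/-- Sections of the generalized tangent bundle `TM ⊕ T*M`, modelled algebraically. -/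
abbrev GenSec (A : Type*) [CommRing A] [Algebra ℝ A] :=
  Derivation ℝ A A × (Derivation ℝ A A →ₗ[A] A)

section CourantAlgebra
variable {A : Type*} [CommRing A] [Algebra ℝ A]

@[simp] lemma dF_apply (f : A) (Z : Derivation ℝ A A) : dF f Z = Z f := rfl

@[simp] lemma lieDer_apply (X : Derivation ℝ A A) (β : Derivation ℝ A A →ₗ[A] A)
    (Z : Derivation ℝ A A) : lieDer X β Z = X (β Z) - β ⁅X, Z⁆ := rfl

@[simp] lemma courantBracket_fst (p q : GenSec A) : (courantBracket p q).1 = ⁅p.1, q.1⁆ := rfl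

@[simp] lemma courantBracket_snd_apply (p q : GenSec A) (W : Derivation ℝ A A) :
    (courantBracket p q).2 W
      = p.1 (q.2 W) - q.2 ⁅p.1, W⁆ - (q.1 (p.2 W) - p.2 ⁅q.1, W⁆)
        - (1/2 : ℝ) • W (q.2 p.1 - p.2 q.1) := rfl

/-- The Ševera–Weinstein bracket `[·,·]_Φ`. -/
noncomputable def twistedBracket
    (Φ : Derivation ℝ A A →ₗ[A] Derivation ℝ A A →ₗ[A] Derivation ℝ A A →ₗ[A] A)
    (p q : GenSec A) : GenSec A :=
  courantBracket p q + (0, Φ p.1 q.1)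

def jacobiator (br : GenSec A → GenSec A → GenSec A) (p q r : GenSec A) : GenSec A :=
  br (br p q) r + br (br q r) p + br (br r p) q

noncomputable def cyclicPairing (br : GenSec A → GenSec A → GenSec A) (p q r : GenSec A) : A :=
  genPairing (br p q) r + genPairing (br q r) p + genPairing (br r p) q

/-- The Koszul formula for `dΦ(X₀, X₁, X₂, X₃)`. -/
def extDeriv₃ (Φ : Derivation ℝ A A →ₗ[A] Derivation ℝ A A →ₗ[A] Derivation ℝ A A →ₗ[A] A)
    (X₀ X₁ X₂ X₃ : Derivation ℝ A A) : A :=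
  X₀ (Φ X₁ X₂ X₃) - X₁ (Φ X₀ X₂ X₃) + X₂ (Φ X₀ X₁ X₃) - X₃ (Φ X₀ X₁ X₂)
    - Φ ⁅X₀, X₁⁆ X₂ X₃ + Φ ⁅X₀, X₂⁆ X₁ X₃ - Φ ⁅X₀, X₃⁆ X₁ X₂
    - Φ ⁅X₁, X₂⁆ X₀ X₃ + Φ ⁅X₁, X₃⁆ X₀ X₂ - Φ ⁅X₂, X₃⁆ X₀ X₁

lemma jacobiator_courantBracket_fst (p q r : GenSec A) :
    (jacobiator courantBracket p q r).1 = 0 := by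
  simp only [jacobiator, Prod.fst_add, courantBracket_fst]
  rw [← lie_skew ⁅p.1, q.1⁆, ← lie_skew ⁅q.1, r.1⁆, ← lie_skew ⁅r.1, p.1⁆, ← neg_add, ← neg_add,
    neg_eq_zero, ← lie_jacobi p.1 q.1 r.1]
  abel

/-- Courant's theorem, i.e. property iii) for `Φ = 0`, on the `T*M`-component. -/
lemma jacobiator_courantBracket_snd (p q r : GenSec A) :
    (jacobiator courantBracket p q r).2
      = (1/3 : ℝ) • dF (cyclicPairing courantBracket p q r) := by
  obtain ⟨X, α⟩ := p
  obtain ⟨Y, β⟩ := q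
  obtain ⟨Z, γ⟩ := r
  have hXY : ⁅Y, X⁆ = -⁅X, Y⁆ := (lie_skew Y X).symm
  have hYZ : ⁅Z, Y⁆ = -⁅Y, Z⁆ := (lie_skew Z Y).symm
  have hXZ : ⁅Z, X⁆ = -⁅X, Z⁆ := (lie_skew Z X).symm
  ext W
  simp only [hXY, hYZ, hXZ, jacobiator, cyclicPairing, genPairing, Prod.snd_add,
    LinearMap.add_apply, LinearMap.smul_apply, courantBracket_snd_apply, courantBracket_fst,
    dF_apply, map_add, map_sub, map_neg, neg_lie, Derivation.neg_apply, Derivation.map_smul,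
    lie_lie, Derivation.commutator_apply, smul_sub, smul_add, smul_neg]
  module

lemma courantBracket_add_cotangent_left (s r : GenSec A) (φ : Derivation ℝ A A →ₗ[A] A) :
    courantBracket (s + (0, φ)) r
      = courantBracket s r + (0, (1/2 : ℝ) • dF (φ r.1) - lieDer r.1 φ) := by
  refine Prod.ext (by simp) (LinearMap.ext fun W => ?_)
  simp only [courantBracket_snd_apply, Prod.fst_add, Prod.snd_add, add_zero, LinearMap.add_apply,
    LinearMap.sub_apply, LinearMap.smul_apply, dF_apply, lieDer_apply, map_add, map_sub]
  module

section ThreeForm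
variable (Φ : Derivation ℝ A A →ₗ[A] Derivation ℝ A A →ₗ[A] Derivation ℝ A A →ₗ[A] A)

noncomputable def twistTerm (X Y Z : Derivation ℝ A A) : Derivation ℝ A A →ₗ[A] A :=
  Φ ⁅X, Y⁆ Z + ((1/2 : ℝ) • dF (Φ X Y Z) - lieDer Z (Φ X Y))

lemma twistedBracket_twistedBracket (p q r : GenSec A) :
    twistedBracket Φ (twistedBracket Φ p q) r
      = courantBracket (courantBracket p q) r + (0, twistTerm Φ p.1 q.1 r.1) := by
  have hfst : (twistedBracket Φ p q).1 = ⁅p.1, q.1⁆ := add_zero _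
  rw [twistedBracket, hfst, twistedBracket, courantBracket_add_cotangent_left, add_assoc]
  exact congrArg _ (Prod.ext (zero_add 0) (add_comm _ _))

lemma jacobiator_twistedBracket (p q r : GenSec A) :
    jacobiator (twistedBracket Φ) p q r = jacobiator courantBracket p q r
      + (0, twistTerm Φ p.1 q.1 r.1 + twistTerm Φ q.1 r.1 p.1 + twistTerm Φ r.1 p.1 q.1) := by
  simp only [jacobiator, twistedBracket_twistedBracket]
  ext : 1 <;> simp only [Prod.fst_add, Prod.snd_add] <;> abel

variable {Φ}

lemma threeForm_cyclic (hΦ₁ : ∀ X Y Z, Φ X Y Z = - Φ Y X Z)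
    (hΦ₂ : ∀ X Y Z, Φ X Y Z = - Φ X Z Y) (X Y Z : Derivation ℝ A A) :
    Φ X Y Z = Φ Y Z X := by
  rw [hΦ₁, hΦ₂, neg_neg]

lemma cyclicPairing_twistedBracket (hΦ₁ : ∀ X Y Z, Φ X Y Z = - Φ Y X Z)
    (hΦ₂ : ∀ X Y Z, Φ X Y Z = - Φ X Z Y) (p q r : GenSec A) :
    cyclicPairing (twistedBracket Φ) p q r
      = cyclicPairing courantBracket p q r + (3/2 : ℝ) • Φ p.1 q.1 r.1 := by
  have h₁ : Φ q.1 r.1 p.1 = Φ p.1 q.1 r.1 := (threeForm_cyclic hΦ₁ hΦ₂ _ _ _).symm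
  have h₂ : Φ r.1 p.1 q.1 = Φ p.1 q.1 r.1 := threeForm_cyclic hΦ₁ hΦ₂ _ _ _
  simp only [cyclicPairing, genPairing, twistedBracket, Prod.snd_add, Prod.fst_add, add_zero,
    LinearMap.add_apply, h₁, h₂]
  module

lemma twistTerm_cyclic_sum_apply (hΦ₁ : ∀ X Y Z, Φ X Y Z = - Φ Y X Z)
    (hΦ₂ : ∀ X Y Z, Φ X Y Z = - Φ X Z Y) (X Y Z W : Derivation ℝ A A) :
    (twistTerm Φ X Y Z + twistTerm Φ Y Z X + twistTerm Φ Z X Y) W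
      = (1/2 : ℝ) • W (Φ X Y Z) - extDeriv₃ Φ X Y Z W := by
  have hcyc := threeForm_cyclic hΦ₁ hΦ₂
  have hP1 : Φ Y Z X = Φ X Y Z := (hcyc X Y Z).symm
  have hP2 : Φ Z X Y = Φ X Y Z := hcyc Z X Y
  have hP3 : Φ Z X W = -Φ X Z W := hΦ₁ Z X W
  have hP4 : Φ X Y ⁅Z, W⁆ = Φ ⁅Z, W⁆ X Y := by rw [hcyc, hcyc]
  have hP5 : Φ Y Z ⁅X, W⁆ = Φ ⁅X, W⁆ Y Z := by rw [hcyc, hcyc]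
  have hP6 : Φ Z X ⁅Y, W⁆ = -Φ ⁅Y, W⁆ X Z := by rw [hcyc, hcyc, hΦ₂]
  have hL : ⁅Z, X⁆ = -⁅X, Z⁆ := (lie_skew Z X).symm
  simp only [twistTerm, extDeriv₃, LinearMap.add_apply, LinearMap.sub_apply, LinearMap.smul_apply,
    dF_apply, lieDer_apply, hP1, hP2, hP3, hP4, hP5, hP6, hL, map_neg, LinearMap.neg_apply]
  module

lemma jacobiator_twistedBracket_snd_apply (hΦ₁ : ∀ X Y Z, Φ X Y Z = - Φ Y X Z)
    (hΦ₂ : ∀ X Y Z, Φ X Y Z = - Φ X Z Y) (p q r : GenSec A) (W : Derivation ℝ A A) :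
    (jacobiator (twistedBracket Φ) p q r).2 W
      = (1/3 : ℝ) • W (cyclicPairing (twistedBracket Φ) p q r) - extDeriv₃ Φ p.1 q.1 r.1 W := by
  rw [jacobiator_twistedBracket, Prod.snd_add, LinearMap.add_apply, jacobiator_courantBracket_snd,
    twistTerm_cyclic_sum_apply hΦ₁ hΦ₂, cyclicPairing_twistedBracket hΦ₁ hΦ₂]
  simp only [LinearMap.smul_apply, dF_apply, map_add, Derivation.map_smul]
  module

lemma jacobiator_twistedBracket_eq_iff (hΦ₁ : ∀ X Y Z, Φ X Y Z = - Φ Y X Z)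
    (hΦ₂ : ∀ X Y Z, Φ X Y Z = - Φ X Z Y) (p q r : GenSec A) :
    jacobiator (twistedBracket Φ) p q r
        = (1/3 : ℝ) • (0, dF (cyclicPairing (twistedBracket Φ) p q r))
      ↔ ∀ W, extDeriv₃ Φ p.1 q.1 r.1 W = 0 := by
  have hfst : (jacobiator (twistedBracket Φ) p q r).1 = 0 := by
    rw [jacobiator_twistedBracket, Prod.fst_add, jacobiator_courantBracket_fst, add_zero]
  simp only [Prod.ext_iff, LinearMap.ext_iff, hfst, Prod.smul_fst, Prod.smul_snd, smul_zero,
    true_and, jacobiator_twistedBracket_snd_apply hΦ₁ hΦ₂, LinearMap.smul_apply, dF_apply,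
    sub_eq_self]

end ThreeForm

end CourantAlgebra

section Manifold
variable {E' : Type*} [NormedAddCommGroup E'] [NormedSpace ℝ E']
  {H : Type*} [TopologicalSpace H] (I : ModelWithCorners ℝ E' H)
  (M : Type*) [TopologicalSpace M] [ChartedSpace H M] [IsManifold I (⊤ : ℕ∞) M]

/-- The ℝ-algebra of smooth real functions on the manifold `M`. -/
noncomputable abbrev SmoothFn := C^(⊤ : ℕ∞)⟮I, M; ℝ⟯

/-- The Ševera–Weinstein bracket, obtained from the Courant bracket on `TM ⊕ T*M` by
adding `i(X∧Y)Φ` to the `T*M`-component for a `3`-form `Φ`, satisfies the Jacobi-type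
property iii) of a skew-symmetric Courant algebroid if and only if `dΦ = 0`. -/
theorem severa_weinstein_jacobi_iff_closed
    (Φ : Derivation ℝ (SmoothFn I M) (SmoothFn I M) →ₗ[SmoothFn I M]
         Derivation ℝ (SmoothFn I M) (SmoothFn I M) →ₗ[SmoothFn I M]
         Derivation ℝ (SmoothFn I M) (SmoothFn I M) →ₗ[SmoothFn I M] SmoothFn I M)
    (hΦ₁ : ∀ X Y Z, Φ X Y Z = - Φ Y X Z)
    (hΦ₂ : ∀ X Y Z, Φ X Y Z = - Φ X Z Y)
    (brΦ : GenSec (SmoothFn I M) → GenSec (SmoothFn I M) → GenSec (SmoothFn I M))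
    (hbrΦ : ∀ p q, brΦ p q = courantBracket p q + (0, Φ p.1 q.1)) :
    (∀ p q r : GenSec (SmoothFn I M),
        brΦ (brΦ p q) r + brΦ (brΦ q r) p + brΦ (brΦ r p) q
          = (1/3 : ℝ) • ((0, dF (genPairing (brΦ p q) r + genPairing (brΦ q r) p
              + genPairing (brΦ r p) q)) : GenSec (SmoothFn I M)))
    ↔ (∀ X₀ X₁ X₂ X₃ : Derivation ℝ (SmoothFn I M) (SmoothFn I M),
        X₀ (Φ X₁ X₂ X₃) - X₁ (Φ X₀ X₂ X₃) + X₂ (Φ X₀ X₁ X₃) - X₃ (Φ X₀ X₁ X₂)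
          - Φ ⁅X₀, X₁⁆ X₂ X₃ + Φ ⁅X₀, X₂⁆ X₁ X₃ - Φ ⁅X₀, X₃⁆ X₁ X₂
          - Φ ⁅X₁, X₂⁆ X₀ X₃ + Φ ⁅X₁, X₃⁆ X₀ X₂ - Φ ⁅X₂, X₃⁆ X₀ X₁ = 0) := by
  obtain rfl : brΦ = twistedBracket Φ := funext₂ hbrΦ
  refine ⟨fun h X₀ X₁ X₂ X₃ => ?_, fun h p q r => ?_⟩
  · exact (jacobiator_twistedBracket_eq_iff hΦ₁ hΦ₂ (X₀, 0) (X₁, 0) (X₂, 0)).1 (h _ _ _) X₃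
  · exact (jacobiator_twistedBracket_eq_iff hΦ₁ hΦ₂ p q r).2 fun W => h p.1 q.1 r.1 W

end Manifold
end

section
/- In a para-Hermitian vector space W with eigenspace decomposition W = W₊ ⊕ W₋ of F, for any Dirac subspace L one has ker(ω|_L) = (W₊ ∩ L) ⊕ (W₋ ∩ L), where ω(X,Y) = g(FX,Y); equivalently, ker(ω|_L) = L ∩ F(L). -/
open Module Submodule

/-! A Dirac subspace `L` is isotropic of half the dimension, hence equal to its own
`g`-orthogonal. So `x ∈ L` lies in the kernel of `ω|_L` iff `F x ∈ L^⊥ = L`, i.e.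
`x ∈ L ∩ F(L)`; and since `F` is an involution, `x ∈ L ∩ F(L)` splits as
`x = (x + F x)/2 + (x - F x)/2` into eigenvectors of `F` lying in `L`. -/

namespace Submodule

variable {R V : Type*} [Ring R] [AddCommGroup V] [Module R V]

theorem map_eq_comap_of_involutive {F : V →ₗ[R] V} (hF : Function.Involutive F)
    (L : Submodule R V) : L.map F = L.comap F :=
  map_equiv_eq_comap_symm (LinearEquiv.ofInvolutive F hF) L

theorem ker_sub_id_inf_sup_ker_add_id_inf [Invertible (2 : R)] {F : V →ₗ[R] V}
    (hF : Function.Involutive F) (L : Submodule R V) :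
    (LinearMap.ker (F - LinearMap.id) ⊓ L) ⊔ (LinearMap.ker (F + LinearMap.id) ⊓ L) =
      L ⊓ L.comap F := by
  apply le_antisymm
  · refine sup_le (fun x ⟨hx, hxL⟩ => ⟨hxL, ?_⟩) (fun x ⟨hx, hxL⟩ => ⟨hxL, ?_⟩)
    · show F x ∈ L
      rwa [sub_eq_zero.mp hx]
    · show F x ∈ L
      rw [eq_neg_of_add_eq_zero_left hx]
      exact L.neg_mem hxL
  · rintro x ⟨hxL, hFxL⟩
    have hsplit : x = (⅟2 : R) • (x + F x) + (⅟2 : R) • (x - F x) := by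
      rw [← smul_add, add_add_sub_cancel, ← two_smul R x, smul_smul, invOf_mul_self, one_smul]
    rw [hsplit]
    refine add_mem_sup ⟨?_, L.smul_mem _ (L.add_mem hxL hFxL)⟩
      ⟨?_, L.smul_mem _ (L.sub_mem hxL hFxL)⟩
    · simp [hF x, add_comm]
    · simp [hF x]

end Submodule

namespace LinearMap.BilinForm

variable {K V : Type*} [Field K] [AddCommGroup V] [Module K V] [FiniteDimensional K V]

theorem orthogonal_eq_self_of_isotropic {B : LinearMap.BilinForm K V} (hB : B.Nondegenerate)
    {L : Submodule K V} (hL : ∀ x ∈ L, ∀ y ∈ L, B x y = 0)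
    (hdim : 2 * finrank K L = finrank K V) : B.orthogonal L = L := by
  have hle : L ≤ B.orthogonal L := fun x hx => mem_orthogonal_iff.2 fun y hy => hL y hy x hx
  refine (eq_of_le_of_finrank_le hle ?_).symm
  rw [finrank_orthogonal hB]
  omega

end LinearMap.BilinForm

open LinearMap.BilinForm in
theorem dirac_kernel_of_restricted_two_form_general
    {W : Type*} [AddCommGroup W] [Module ℝ W] [FiniteDimensional ℝ W] (n : ℕ)
    (hdim : finrank ℝ W = 2 * n)
    (g : W →ₗ[ℝ] W →ₗ[ℝ] ℝ)
    (hsymm : ∀ x y, g x y = g y x)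
    (hnondeg : ∀ x, (∀ y, g x y = 0) → x = 0)
    (F : W →ₗ[ℝ] W)
    (hFF : ∀ x, F (F x) = x)
    (L : Submodule ℝ W)
    (hiso : ∀ x ∈ L, ∀ y ∈ L, g x y = 0)
    (hLdim : finrank ℝ L = n)
    (Wp Wm : Submodule ℝ W)
    (hWp : Wp = LinearMap.ker (F - LinearMap.id))
    (hWm : Wm = LinearMap.ker (F + LinearMap.id)) :
    ∀ x : W,
      ((x ∈ L ∧ ∀ y ∈ L, g (F x) y = 0) ↔ x ∈ (Wp ⊓ L) ⊔ (Wm ⊓ L)) ∧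
      ((x ∈ L ∧ ∀ y ∈ L, g (F x) y = 0) ↔ x ∈ L ⊓ Submodule.map F L) := by
  have hnd : g.Nondegenerate :=
    (LinearMap.IsRefl.nondegenerate_iff_separatingLeft fun x y h => (hsymm y x).trans h).2 hnondeg
  have hLL : orthogonal g L = L := orthogonal_eq_self_of_isotropic hnd hiso (by omega)
  have hkerL : ∀ z, (∀ y ∈ L, g z y = 0) ↔ z ∈ L := fun z => by
    conv_rhs => rw [← hLL]
    simp only [mem_orthogonal_iff, hsymm _ z]
  intro x
  have hker : (x ∈ L ∧ ∀ y ∈ L, g (F x) y = 0) ↔ x ∈ L ⊓ L.map F := by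
    rw [map_eq_comap_of_involutive hFF, mem_inf, mem_comap, hkerL]
  refine ⟨hker.trans ?_, hker⟩
  rw [hWp, hWm, ker_sub_id_inf_sup_ker_add_id_inf hFF, map_eq_comap_of_involutive hFF]

/-- In a para-Hermitian vector space `(W, g, F)` of dimension `2n` with eigenspace
decomposition `W = W₊ ⊕ W₋` of `F`, for any Dirac (maximal `g`-isotropic) subspace `L`
one has `ker(ω|_L) = (W₊ ∩ L) ⊕ (W₋ ∩ L)`, where `ω(X,Y) = g(FX,Y)`; equivalently
`ker(ω|_L) = L ∩ F(L)`. -/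
theorem dirac_kernel_of_restricted_two_form
    {W : Type*} [AddCommGroup W] [Module ℝ W] [FiniteDimensional ℝ W] (n : ℕ)
    (hdim : finrank ℝ W = 2 * n)
    (g : W →ₗ[ℝ] W →ₗ[ℝ] ℝ)
    (hsymm : ∀ x y, g x y = g y x)
    (hnondeg : ∀ x, (∀ y, g x y = 0) → x = 0)
    (F : W →ₗ[ℝ] W)
    (hFF : ∀ x, F (F x) = x)
    (hgF : ∀ x y, g (F x) (F y) = - g x y)
    (L : Submodule ℝ W)
    (hiso : ∀ x ∈ L, ∀ y ∈ L, g x y = 0)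
    (hLdim : finrank ℝ L = n)
    (Wp Wm : Submodule ℝ W)
    (hWp : Wp = LinearMap.ker (F - LinearMap.id))
    (hWm : Wm = LinearMap.ker (F + LinearMap.id)) :
    ∀ x : W,
      ((x ∈ L ∧ ∀ y ∈ L, g (F x) y = 0) ↔ x ∈ (Wp ⊓ L) ⊔ (Wm ⊓ L)) ∧
      ((x ∈ L ∧ ∀ y ∈ L, g (F x) y = 0) ↔ x ∈ L ⊓ Submodule.map F L) :=
  dirac_kernel_of_restricted_two_form_general n hdim g hsymm hnondeg F hFF L hiso hLdim Wp Wm hWp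
    hWm
end

section
/- The para-Hermitian group pH(W) (elements of O(W,g) commuting with F) acts transitively on the set of Dirac subspaces L of W with prescribed invariants k = dim(W₋ ∩ L) and r = rank(ω|_L). -/
/-!
Let `W₊ = ker (F - 1)` and `W₋ = ker (F + 1)`. Both are `g`-isotropic and complementary, so `g`
identifies `W₋` with the dual of `W₊`, and every `A ∈ GL(W₊)` extends to `A ⊕ A⁻ᵀ ∈ pH(W)`.
For a Dirac subspace `L`, pick a complement `S` of `L ∩ W₋` in `L`. Then `x ↦ x + F x` embeds `S`
in `W₊`, and `ω = g(F ·, ·)` restricts to an alternating form on `S` of dimension `n - k` and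
nullity `dim ker(ω|_L) - k`. Alternating forms are classified by these two numbers (split off a
hyperbolic plane and induct), which gives an isometry `f : S ≃ S'`. Extending the induced map
between the images in `W₊` gives `φ ∈ pH(W)` with `φ ≡ f` modulo `W₋` on `S`. The polarisation
identity `2 g(a, b) = g(a + F a, b) + g(a, b + F b)` then shows `φ(L) ⊥ L'`, and since Dirac
subspaces are their own orthogonals, `φ(L) = L'`.
-/

open Module Submodule LinearMap

theorem IsModularLattice.exists_disjoint_and_inf_sup_eq {α : Type*} [Lattice α] [BoundedOrder α]
    [IsModularLattice α] [ComplementedLattice α] (a b : α) :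
    ∃ c, Disjoint c a ∧ a ⊓ b ⊔ c = b := by
  obtain ⟨c, hdisj, hsup⟩ := exists_disjoint_and_sup_eq (inf_le_right : a ⊓ b ≤ b)
  have hcb : c ≤ b := hsup ▸ le_sup_right
  refine ⟨c, disjoint_iff_inf_le.mpr ?_, hsup⟩
  calc c ⊓ a ≤ a ⊓ b ⊓ c := le_inf (le_inf inf_le_right (inf_le_left.trans hcb)) inf_le_left
    _ ≤ ⊥ := hdisj.le_bot

theorem LinearMap.exists_apply_eq_one {K V : Type*} [Field K] [AddCommGroup V] [Module K V]
    {B : V →ₗ[K] V →ₗ[K] K} (hB : B ≠ 0) : ∃ x y, B x y = 1 := by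
  obtain ⟨x, hx⟩ : ∃ x, B x ≠ 0 := by
    by_contra! h
    exact hB (LinearMap.ext h)
  obtain ⟨y, hy⟩ : ∃ y, B x y ≠ 0 := by
    by_contra! h
    exact hx (LinearMap.ext h)
  exact ⟨x, (B x y)⁻¹ • y, by simp [hy]⟩

theorem LinearMap.finrank_ker_eq_of_hyperbolic_splitting {K V : Type*} [Field K] [AddCommGroup V]
    [Module K V] {B : V →ₗ[K] V →ₗ[K] K} {C : Submodule K V} (e : ((K × K) × C) ≃ₗ[K] V)
    (he : ∀ p q : (K × K) × C, B (e p) (e q) = p.1.1 * q.1.2 - p.1.2 * q.1.1 + B p.2 q.2) :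
    finrank K (ker (B.compl₁₂ C.subtype C.subtype)) = finrank K (ker B) := by
  set ι : C →ₗ[K] V := (e : (K × K) × C →ₗ[K] V) ∘ₗ inr K (K × K) C
  have hι : Function.Injective ι := e.injective.comp inr_injective
  have hker : ker B = (ker (B.compl₁₂ C.subtype C.subtype)).map ι := by
    ext v
    obtain ⟨⟨⟨a, b⟩, c⟩, rfl⟩ := e.surjective v
    have hιc : ∀ c' : C, ι c' = e ((0, 0), c') := fun _ => rfl
    simp only [mem_ker, mem_map, hιc]
    constructor
    · intro h
      have h' : ∀ q, B (e ((a, b), c)) (e q) = 0 := fun q => by rw [h, zero_apply]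
      have ha : a = 0 := by simpa [he] using h' ((0, 1), 0)
      have hb : b = 0 := by simpa [he] using h' ((1, 0), 0)
      refine ⟨c, ?_, by rw [ha, hb]⟩
      ext d
      simpa [he] using h' ((0, 0), d)
    · rintro ⟨c', hc', hc'eq⟩
      ext w
      obtain ⟨q, rfl⟩ := e.surjective w
      rw [← hc'eq]
      simpa [he] using LinearMap.congr_fun hc' q.2
  rw [hker, LinearEquiv.finrank_eq (equivMapOfInjective _ hι _)]

namespace LinearMap.IsAlt

variable {K V : Type*} [Field K] [AddCommGroup V] [Module K V] {B : V →ₗ[K] V →ₗ[K] K}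

theorem exists_hyperbolic_splitting (hB : B.IsAlt) {x y : V} (hxy : B x y = 1) :
    ∃ (C : Submodule K V) (e : ((K × K) × C) ≃ₗ[K] V), ∀ p q : (K × K) × C,
      B (e p) (e q) = p.1.1 * q.1.2 - p.1.2 * q.1.1 + B p.2 q.2 := by
  set C := ker (B x) ⊓ ker (B y)
  have hyx : B y x = -1 := by rw [← hB.neg, hxy]
  have hC : ∀ c : C, B x c = 0 ∧ B y c = 0 := fun c => mem_inf.mp c.2
  have hC' : ∀ c : C, B c x = 0 ∧ B c y = 0 := fun c =>
    ⟨by rw [← hB.neg, (hC c).1, neg_zero], by rw [← hB.neg, (hC c).2, neg_zero]⟩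
  let e : ((K × K) × C) →ₗ[K] V :=
    ((toSpanSingleton K V x).coprod (toSpanSingleton K V y)).coprod C.subtype
  have he : ∀ p : (K × K) × C, e p = p.1.1 • x + p.1.2 • y + p.2 := fun p => by simp [e]
  have hform : ∀ p q : (K × K) × C,
      B (e p) (e q) = p.1.1 * q.1.2 - p.1.2 * q.1.1 + B p.2 q.2 := by
    intro p q
    simp only [he, map_add, map_smul, add_apply, smul_apply, smul_eq_mul, hB.self_eq_zero, hxy,
      hyx, (hC _).1, (hC _).2, (hC' _).1, (hC' _).2]
    ring
  have hinj : Function.Injective e := by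
    rw [← ker_eq_bot, eq_bot_iff]
    rintro ⟨⟨a, b⟩, c⟩ hp
    have h : ∀ q, B (e ((a, b), c)) (e q) = 0 := fun q => by
      rw [mem_ker.mp hp, map_zero, zero_apply]
    have ha : a = 0 := by simpa [hform] using h ((0, 1), 0)
    have hb : b = 0 := by simpa [hform] using h ((1, 0), 0)
    have hc : (c : V) = 0 := by simpa [he, ha, hb] using mem_ker.mp hp
    simp [ha, hb, coe_eq_zero.mp hc]
  have hsurj : Function.Surjective e := by
    intro v
    refine ⟨((-B y v, B x v), ⟨v + B y v • x - B x v • y, ?_⟩), ?_⟩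
    · simp only [C, mem_inf, mem_ker, map_add, map_sub, map_smul, smul_eq_mul, hB.self_eq_zero,
        hxy, hyx]
      constructor <;> ring
    · simp only [he]
      module
  exact ⟨C, LinearEquiv.ofBijective e ⟨hinj, hsurj⟩, hform⟩

theorem exists_isometry_of_finrank_ker_eq {V' : Type*} [AddCommGroup V'] [Module K V']
    [FiniteDimensional K V] [FiniteDimensional K V'] {B' : V' →ₗ[K] V' →ₗ[K] K}
    (hB : B.IsAlt) (hB' : B'.IsAlt) (hdim : finrank K V = finrank K V')
    (hker : finrank K (ker B) = finrank K (ker B')) :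
    ∃ f : V ≃ₗ[K] V', ∀ x y, B' (f x) (f y) = B x y := by
  induction hn : finrank K V using Nat.strong_induction_on generalizing V V' with
  | _ n ih =>
  have hB0 : B = 0 ↔ B' = 0 := by
    rw [← ker_eq_top, ← ker_eq_top, eq_top_iff_finrank_eq, eq_top_iff_finrank_eq, hker, hdim]
  by_cases h0 : B = 0
  · refine ⟨LinearEquiv.ofFinrankEq V V' hdim, fun x y => ?_⟩
    simp [h0, hB0.mp h0]
  obtain ⟨x, y, hxy⟩ := exists_apply_eq_one h0
  obtain ⟨x', y', hxy'⟩ := exists_apply_eq_one (mt hB0.mpr h0)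
  obtain ⟨C, e, he⟩ := hB.exists_hyperbolic_splitting hxy
  obtain ⟨C', e', he'⟩ := hB'.exists_hyperbolic_splitting hxy'
  have hC : finrank K C + 2 = n := by
    rw [← hn, ← e.finrank_eq, finrank_prod, finrank_prod, finrank_self, add_comm]
  have hC' : finrank K C' + 2 = n := by
    rw [← hn, hdim, ← e'.finrank_eq, finrank_prod, finrank_prod, finrank_self, add_comm]
  obtain ⟨fC, hfC⟩ := ih (finrank K C) (by omega)
    (B := B.compl₁₂ C.subtype C.subtype) (B' := B'.compl₁₂ C'.subtype C'.subtype)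
    (fun c => hB c) (fun c => hB' c) (by omega)
    (by rw [finrank_ker_eq_of_hyperbolic_splitting e he,
      finrank_ker_eq_of_hyperbolic_splitting e' he', hker]) rfl
  refine ⟨e.symm ≪≫ₗ (LinearEquiv.refl K (K × K)).prodCongr fC ≪≫ₗ e', fun u v => ?_⟩
  obtain ⟨p, rfl⟩ := e.surjective u
  obtain ⟨q, rfl⟩ := e.surjective v
  simpa [he, he'] using hfC p.2 q.2

end LinearMap.IsAlt

theorem LinearMap.finrank_ker_compl₁₂_add_finrank {K V : Type*} [Field K] [AddCommGroup V]
    [Module K V] [FiniteDimensional K V] {B : V →ₗ[K] V →ₗ[K] K} (hB : B.IsRefl)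
    {L N S : Submodule K V} (hN : ∀ n ∈ N, ∀ y ∈ L, B n y = 0) (hSN : Disjoint S N)
    (hL : N ⊔ S = L) :
    finrank K (ker (B.compl₁₂ S.subtype S.subtype)) + finrank K N =
      finrank K (L ⊓ ⨅ y ∈ L, ker (B.flip y) : Submodule K V) := by
  set R := L ⊓ ⨅ y ∈ L, ker (B.flip y)
  have hR : ∀ z, z ∈ R ↔ z ∈ L ∧ ∀ y ∈ L, B z y = 0 := fun z => by simp [R]
  have hSL : S ≤ L := hL ▸ le_sup_right
  have hNR : N ≤ R := fun n hn => (hR n).mpr ⟨hL ▸ mem_sup_left hn, hN n hn⟩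
  have hSR : (ker (B.compl₁₂ S.subtype S.subtype)).map S.subtype = S ⊓ R := by
    ext z
    simp only [mem_map, mem_ker, mem_inf, hR]
    constructor
    · rintro ⟨z, hz, rfl⟩
      refine ⟨z.2, hSL z.2, fun y hy => ?_⟩
      obtain ⟨n, hn, t, ht, rfl⟩ := mem_sup.mp (hL ▸ hy : y ∈ N ⊔ S)
      rw [Submodule.subtype_apply, map_add, hB _ _ (hN n hn z (hSL z.2)), zero_add]
      exact LinearMap.congr_fun hz ⟨t, ht⟩
    · rintro ⟨hzS, -, hz⟩
      exact ⟨⟨z, hzS⟩, LinearMap.ext fun t => hz t (hSL t.2), rfl⟩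
  have hRsup : N ⊔ S ⊓ R = R := by
    rw [← sup_inf_assoc_of_le S hNR, hL, inf_eq_right.mpr inf_le_left]
  have hdisj : N ⊓ (S ⊓ R) = ⊥ :=
    eq_bot_iff.mpr ((inf_le_inf_left N inf_le_left).trans (hSN.symm.eq_bot ▸ le_rfl))
  have := finrank_sup_add_finrank_inf_eq N (S ⊓ R)
  rw [hRsup, hdisj, finrank_bot, ← hSR, finrank_map_subtype_eq] at this
  omega

theorem LinearMap.exists_linearEquiv_comp_eq_of_injective {K V S S' : Type*} [Field K]
    [AddCommGroup V] [Module K V] [FiniteDimensional K V] [AddCommGroup S] [Module K S]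
    [AddCommGroup S'] [Module K S'] {j : S →ₗ[K] V} {j' : S' →ₗ[K] V}
    (hj : Function.Injective j) (hj' : Function.Injective j') (f : S ≃ₗ[K] S') :
    ∃ A : V ≃ₗ[K] V, ∀ s, A (j s) = j' (f s) := by
  obtain ⟨A, hA⟩ := exists_linearEquiv_restrict_eq
    ((LinearEquiv.ofInjective j hj).symm ≪≫ₗ f ≪≫ₗ LinearEquiv.ofInjective j' hj')
  refine ⟨A, fun s => ?_⟩
  simpa using (hA (LinearEquiv.ofInjective j hj s)).symm

section IsotropicComplement

variable {K W : Type*} [Field K] [AddCommGroup W] [Module K W] {g : W →ₗ[K] W →ₗ[K] K}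
  {P Q : Submodule K W}

theorem LinearMap.injective_compl₁₂_of_isotropic (hg : g.SeparatingLeft)
    (hP : ∀ a ∈ P, ∀ b ∈ P, g a b = 0) (hPQ : P ⊔ Q = ⊤) :
    Function.Injective (g.compl₁₂ P.subtype Q.subtype) := by
  rw [← ker_eq_bot, eq_bot_iff]
  intro a ha
  refine (mem_bot K).mpr (Subtype.ext (hg a fun w => ?_))
  obtain ⟨p, hp, q, hq, rfl⟩ := mem_sup.mp (hPQ ▸ mem_top : w ∈ P ⊔ Q)
  rw [map_add, hP a a.2 p hp, zero_add]
  exact LinearMap.congr_fun (mem_ker.mp ha) ⟨q, hq⟩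

theorem LinearMap.bijective_compl₁₂_of_isotropic [FiniteDimensional K W] (hg : g.SeparatingLeft)
    (hP : ∀ a ∈ P, ∀ b ∈ P, g a b = 0) (hQ : ∀ a ∈ Q, ∀ b ∈ Q, g a b = 0) (hPQ : IsCompl P Q) :
    Function.Bijective (g.compl₁₂ Q.subtype P.subtype) := by
  have hQP := injective_compl₁₂_of_isotropic hg hQ (sup_comm P Q ▸ hPQ.sup_eq_top)
  have hPQ' := injective_compl₁₂_of_isotropic hg hP hPQ.sup_eq_top
  have h₁ := finrank_le_finrank_of_injective hQP
  have h₂ := finrank_le_finrank_of_injective hPQ'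
  rw [Subspace.dual_finrank_eq] at h₁ h₂
  refine ⟨hQP, (injective_iff_surjective_of_finrank_eq_finrank ?_).mp hQP⟩
  rw [Subspace.dual_finrank_eq]
  omega

theorem LinearMap.exists_isometry_extending_of_isotropic [FiniteDimensional K W]
    (hg : g.SeparatingLeft) (hsymm : ∀ x y, g x y = g y x) (hP : ∀ a ∈ P, ∀ b ∈ P, g a b = 0)
    (hQ : ∀ a ∈ Q, ∀ b ∈ Q, g a b = 0) (hPQ : IsCompl P Q) (A : P ≃ₗ[K] P) :
    ∃ φ : W ≃ₗ[K] W, (∀ x y, g (φ x) (φ y) = g x y) ∧ (∀ p : P, φ p = A p) ∧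
      ∀ q : Q, φ q ∈ Q := by
  set Ψ := LinearEquiv.ofBijective _ (bijective_compl₁₂_of_isotropic hg hP hQ hPQ)
  -- `A⁻ᵀ`, transported to `Q` through the duality `Q ≃ Dual P` given by `g`
  set A' : Q ≃ₗ[K] Q := Ψ ≪≫ₗ A.symm.dualMap ≪≫ₗ Ψ.symm
  have hA' : ∀ q p, g (A' q) (A p) = g q p := fun q p => by
    have h : Ψ (A' q) = A.symm.dualMap (Ψ q) := Ψ.apply_symm_apply _
    simpa [Ψ] using LinearMap.congr_fun h (A p)
  set E := P.prodEquivOfIsCompl Q hPQ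
  have hE : ∀ p q, (E (p, q) : W) = p + q := fun _ _ => rfl
  set φ := E.symm ≪≫ₗ A.prodCongr A' ≪≫ₗ E
  have hφ : ∀ (p : P) (q : Q), φ (p + q) = A p + A' q := fun p q => by
    rw [← hE, ← hE]
    simp [φ]
  refine ⟨φ, fun x y => ?_, fun p => by simpa using hφ p 0, fun q => ?_⟩
  · obtain ⟨⟨p, q⟩, rfl⟩ := E.surjective x
    obtain ⟨⟨p', q'⟩, rfl⟩ := E.surjective y
    simp only [hE, hφ, map_add, add_apply, hP _ (A _).2 _ (A _).2, hQ _ (A' _).2 _ (A' _).2,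
      hP _ p.2 _ p'.2, hQ _ q.2 _ q'.2]
    rw [hsymm (A p), hA', hA', hsymm p]
  · have h := hφ 0 q
    simp only [ZeroMemClass.coe_zero, zero_add, map_zero] at h
    exact h ▸ (A' q).2

theorem LinearMap.BilinForm.orthogonal_eq_self_of_isotropic_s19 [FiniteDimensional K W]
    (hg : g.SeparatingLeft) {L : Submodule K W} (hL : ∀ a ∈ L, ∀ b ∈ L, g a b = 0)
    (hdim : 2 * finrank K L = finrank K W) :
    LinearMap.BilinForm.orthogonal g L = L := by
  have hle : L ≤ LinearMap.BilinForm.orthogonal g L := fun a ha =>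
    mem_orthogonal_iff.mpr fun b hb => hL b hb a ha
  refine (eq_of_le_of_finrank_le hle ?_).symm
  rw [finrank_orthogonal (Nondegenerate.ofSeparatingLeft hg)]
  omega

end IsotropicComplement

theorem LinearEquiv.symm_apply_comm {R M : Type*} [Semiring R] [AddCommMonoid M] [Module R M]
    {φ : M ≃ₗ[R] M} {F : M →ₗ[R] M} (h : ∀ x, φ (F x) = F (φ x)) (x : M) :
    φ.symm (F x) = F (φ.symm x) :=
  φ.injective (by rw [h, φ.apply_symm_apply, φ.apply_symm_apply])

section Involution

variable {W : Type*} [AddCommGroup W] [Module ℝ W] {F : W →ₗ[ℝ] W}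

theorem LinearMap.mem_ker_sub_id_iff {x : W} : x ∈ ker (F - LinearMap.id) ↔ F x = x := by
  rw [mem_ker, LinearMap.sub_apply, id_apply, sub_eq_zero]

theorem LinearMap.mem_ker_add_id_iff {x : W} : x ∈ ker (F + LinearMap.id) ↔ F x = -x := by
  rw [mem_ker, LinearMap.add_apply, id_apply, add_eq_zero_iff_eq_neg]

theorem LinearMap.isCompl_ker_sub_id_ker_add_id (hFF : ∀ x, F (F x) = x) :
    IsCompl (ker (F - LinearMap.id)) (ker (F + LinearMap.id)) := by
  refine ⟨disjoint_def.mpr fun z hp hm => ?_, codisjoint_iff.mpr (eq_top_iff.mpr fun z _ => ?_)⟩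
  · rw [mem_ker_sub_id_iff] at hp
    rw [mem_ker_add_id_iff, hp, eq_neg_iff_add_eq_zero, ← two_smul ℝ] at hm
    simpa using hm
  · rw [show z = (2⁻¹ : ℝ) • (z + F z) + (2⁻¹ : ℝ) • (z - F z) by module]
    refine add_mem_sup (mem_ker_sub_id_iff.mpr ?_) (mem_ker_add_id_iff.mpr ?_) <;>
      simp only [map_smul, map_add, map_sub, hFF] <;> module

theorem LinearMap.add_apply_eq_of_sub_mem_ker_add_id {u v : W}
    (h : u - v ∈ ker (F + LinearMap.id)) : u + F u = v + F v := by
  rw [mem_ker_add_id_iff, map_sub] at h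
  rw [← sub_eq_zero]
  calc u + F u - (v + F v) = (u - v) + (F u - F v) := by abel
    _ = 0 := by rw [h, add_neg_cancel]

theorem LinearMap.map_mem_ker_add_id {φ : W →ₗ[ℝ] W} (hφF : ∀ x, φ (F x) = F (φ x)) {w : W}
    (hw : w ∈ ker (F + LinearMap.id)) : φ w ∈ ker (F + LinearMap.id) := by
  rw [mem_ker_add_id_iff] at hw ⊢
  rw [← hφF, hw, map_neg]

theorem LinearEquiv.add_apply_eq_of_forall_sub_mem_ker_add_id {S S' : Submodule ℝ W}
    {f : S ≃ₗ[ℝ] S'} {φ : W ≃ₗ[ℝ] W} (hφF : ∀ x, φ (F x) = F (φ x))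
    (hφS : ∀ s : S, φ s - f s ∈ ker (F + LinearMap.id)) {z : W} {s : S}
    (hzs : z - s ∈ ker (F + LinearMap.id)) : φ z + F (φ z) = f s + F (f s) := by
  refine LinearMap.add_apply_eq_of_sub_mem_ker_add_id ?_
  rw [show φ z - f s = φ (z - s) + (φ s - f s) by rw [map_sub]; abel]
  exact add_mem (map_mem_ker_add_id hφF hzs) (hφS s)

theorem LinearEquiv.symm_sub_mem_ker_add_id {S S' : Submodule ℝ W} {f : S ≃ₗ[ℝ] S'}
    {φ : W ≃ₗ[ℝ] W} (hφF : ∀ x, φ (F x) = F (φ x))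
    (hφS : ∀ s : S, φ s - f s ∈ ker (F + LinearMap.id)) (s' : S') :
    φ.symm s' - f.symm s' ∈ ker (F + LinearMap.id) := by
  have h := map_mem_ker_add_id (LinearEquiv.symm_apply_comm hφF) (hφS (f.symm s'))
  simp only [LinearEquiv.coe_coe, map_sub, φ.symm_apply_apply, f.apply_symm_apply] at h
  rw [← neg_sub]
  exact neg_mem h

end Involution

namespace ParaHermitian

variable {W : Type*} [AddCommGroup W] [Module ℝ W] {g : W →ₗ[ℝ] W →ₗ[ℝ] ℝ} {F : W →ₗ[ℝ] W}

theorem isotropic_ker_sub_id (hgF : ∀ x y, g (F x) (F y) = - g x y) :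
    ∀ a ∈ ker (F - LinearMap.id), ∀ b ∈ ker (F - LinearMap.id), g a b = 0 := by
  intro a ha b hb
  have := hgF a b
  rw [mem_ker_sub_id_iff.mp ha, mem_ker_sub_id_iff.mp hb] at this
  linarith

theorem isotropic_ker_add_id (hgF : ∀ x y, g (F x) (F y) = - g x y) :
    ∀ a ∈ ker (F + LinearMap.id), ∀ b ∈ ker (F + LinearMap.id), g a b = 0 := by
  intro a ha b hb
  have := hgF a b
  rw [mem_ker_add_id_iff.mp ha, mem_ker_add_id_iff.mp hb, map_neg, map_neg, LinearMap.neg_apply,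
    neg_neg] at this
  linarith

theorem isAlt_comp (hsymm : ∀ x y, g x y = g y x) (hFF : ∀ x, F (F x) = x)
    (hgF : ∀ x y, g (F x) (F y) = - g x y) : (g ∘ₗ F).IsAlt := by
  intro x
  have := hgF x (F x)
  rw [hFF, hsymm x] at this
  rw [comp_apply]
  linarith

theorem two_mul_apply_eq (hFF : ∀ x, F (F x) = x) (hgF : ∀ x y, g (F x) (F y) = - g x y)
    (a b : W) : 2 * g a b = g (a + F a) b + g a (b + F b) := by
  have := hgF (F a) b
  rw [hFF] at this
  simp only [map_add, LinearMap.add_apply, this]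
  ring

theorem comp_apply_eq_zero_of_isotropic {Λ : Submodule ℝ W}
    (hΛ : ∀ a ∈ Λ, ∀ b ∈ Λ, g a b = 0) :
    ∀ w ∈ ker (F + LinearMap.id) ⊓ Λ, ∀ y ∈ Λ, (g ∘ₗ F) w y = 0 := by
  intro w hw y hy
  rw [comp_apply, mem_ker_add_id_iff.mp hw.1, map_neg, LinearMap.neg_apply, hΛ w hw.2 y hy,
    neg_zero]

theorem apply_add_apply_eq_of_isotropic (hgF : ∀ x y, g (F x) (F y) = - g x y)
    {Λ : Submodule ℝ W} (hΛ : ∀ a ∈ Λ, ∀ b ∈ Λ, g a b = 0) {a y s : W} (ha : a ∈ Λ)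
    (hy : y ∈ Λ) (hs : s ∈ Λ) (hys : y - s ∈ ker (F + LinearMap.id)) :
    g (a + F a) y = g (F a) s := by
  have hω : g (F a) (y - s) = 0 := by
    have := hgF a (y - s)
    rw [mem_ker_add_id_iff.mp hys, map_neg, neg_inj] at this
    rw [this, hΛ a ha _ (sub_mem hy hs)]
  rw [map_add, LinearMap.add_apply, hΛ a ha y hy, zero_add, ← sub_eq_zero, ← map_sub, hω]

theorem exists_complement_inf_ker_add_id [FiniteDimensional ℝ W]
    (hsymm : ∀ x y, g x y = g y x) (hFF : ∀ x, F (F x) = x)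
    (hgF : ∀ x y, g (F x) (F y) = - g x y) {L : Submodule ℝ W}
    (hL : ∀ a ∈ L, ∀ b ∈ L, g a b = 0) :
    ∃ S : Submodule ℝ W, Disjoint S (ker (F + LinearMap.id)) ∧
      ker (F + LinearMap.id) ⊓ L ⊔ S = L ∧
      finrank ℝ S + finrank ℝ (ker (F + LinearMap.id) ⊓ L : Submodule ℝ W) = finrank ℝ L ∧
      finrank ℝ (ker ((g ∘ₗ F).compl₁₂ S.subtype S.subtype)) +
          finrank ℝ (ker (F + LinearMap.id) ⊓ L : Submodule ℝ W) =
        finrank ℝ (L ⊓ (⨅ y ∈ L, ker ((g.flip y).comp F)) : Submodule ℝ W) := by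
  obtain ⟨S, hS_disj, hS⟩ :=
    IsModularLattice.exists_disjoint_and_inf_sup_eq (ker (F + LinearMap.id)) L
  have hdim := finrank_sup_add_finrank_inf_eq (ker (F + LinearMap.id) ⊓ L) S
  rw [hS, (hS_disj.symm.mono_left inf_le_left).eq_bot, finrank_bot] at hdim
  refine ⟨S, hS_disj, hS, by omega, ?_⟩
  exact finrank_ker_compl₁₂_add_finrank (isAlt_comp hsymm hFF hgF).isRefl
    (comp_apply_eq_zero_of_isotropic hL) (hS_disj.mono_right inf_le_left) hS

theorem exists_paraHermitian_sub_mem_ker_add_id [FiniteDimensional ℝ W]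
    (hg : g.SeparatingLeft) (hsymm : ∀ x y, g x y = g y x) (hFF : ∀ x, F (F x) = x)
    (hgF : ∀ x y, g (F x) (F y) = - g x y) {S S' : Submodule ℝ W}
    (hS : Disjoint S (ker (F + LinearMap.id))) (hS' : Disjoint S' (ker (F + LinearMap.id)))
    (f : S ≃ₗ[ℝ] S') :
    ∃ φ : W ≃ₗ[ℝ] W, (∀ x y, g (φ x) (φ y) = g x y) ∧ (∀ x, φ (F x) = F (φ x)) ∧
      ∀ s : S, φ s - f s ∈ ker (F + LinearMap.id) := by
  have hcompl := isCompl_ker_sub_id_ker_add_id hFF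
  let j (T : Submodule ℝ W) : T →ₗ[ℝ] ker (F - LinearMap.id) :=
    ((F + LinearMap.id) ∘ₗ T.subtype).codRestrict _ fun t => mem_ker_sub_id_iff.mpr (by
      simp [hFF, add_comm])
  have hj : ∀ T, Disjoint T (ker (F + LinearMap.id)) → Function.Injective (j T) := by
    intro T hT
    rw [← ker_eq_bot, eq_bot_iff]
    intro t ht
    have ht' : (t : W) ∈ ker (F + LinearMap.id) := by
      simpa [j] using congrArg Subtype.val (mem_ker.mp ht)
    exact (mem_bot ℝ).mpr (Subtype.ext (disjoint_def.mp hT t t.2 ht'))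
  obtain ⟨A, hA⟩ := exists_linearEquiv_comp_eq_of_injective (hj S hS) (hj S' hS') f
  obtain ⟨φ, hφg, hφP, hφQ⟩ := exists_isometry_extending_of_isotropic hg hsymm
    (isotropic_ker_sub_id hgF) (isotropic_ker_add_id hgF) hcompl A
  have hφF : ∀ x, φ (F x) = F (φ x) := by
    intro x
    obtain ⟨p, hp, q, hq, rfl⟩ := mem_sup.mp (hcompl.sup_eq_top ▸ mem_top : x ∈ _ ⊔ _)
    have hAp := mem_ker_sub_id_iff.mp (A ⟨p, hp⟩).2
    have hφq : F (φ q) = -φ q := mem_ker_add_id_iff.mp (hφQ ⟨q, hq⟩)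
    rw [map_add, mem_ker_sub_id_iff.mp hp, mem_ker_add_id_iff.mp hq, map_add, map_neg, map_add,
      map_add, hφP ⟨p, hp⟩, hAp, hφq]
  refine ⟨φ, hφg, hφF, fun s => mem_ker.mpr ?_⟩
  have hjs : φ (j S s) = j S' (f s) := (hφP _).trans (congrArg Subtype.val (hA s))
  simp only [j, codRestrict_apply, comp_apply, subtype_apply, LinearMap.add_apply, id_apply,
    map_add, hφF] at hjs
  rw [LinearMap.add_apply, id_apply, map_sub, ← sub_eq_zero.mpr hjs]
  abel

theorem apply_eq_zero_of_sub_mem_ker_add_id (hsymm : ∀ x y, g x y = g y x)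
    (hFF : ∀ x, F (F x) = x) (hgF : ∀ x y, g (F x) (F y) = - g x y) {L L' S S' : Submodule ℝ W}
    (hL : ∀ a ∈ L, ∀ b ∈ L, g a b = 0) (hL' : ∀ a ∈ L', ∀ b ∈ L', g a b = 0)
    (hS : ker (F + LinearMap.id) ⊓ L ⊔ S = L) (hS' : ker (F + LinearMap.id) ⊓ L' ⊔ S' = L')
    (f : S ≃ₗ[ℝ] S') (hf : ∀ a b, g (F (f a)) (f b) = g (F a) b)
    (φ : W ≃ₗ[ℝ] W) (hφg : ∀ x y, g (φ x) (φ y) = g x y) (hφF : ∀ x, φ (F x) = F (φ x))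
    (hφS : ∀ s : S, φ s - f s ∈ ker (F + LinearMap.id)) {z y : W} (hz : z ∈ L) (hy : y ∈ L') :
    g (φ z) y = 0 := by
  have hSL : S ≤ L := hS ▸ le_sup_right
  have hSL' : S' ≤ L' := hS' ▸ le_sup_right
  obtain ⟨w, hw, s, hs, rfl⟩ := mem_sup.mp (hS ▸ hz : z ∈ _ ⊔ S)
  obtain ⟨w', hw', s', hs', rfl⟩ := mem_sup.mp (hS' ▸ hy : y ∈ _ ⊔ S')
  set t := f.symm ⟨s', hs'⟩
  have hft : (f t : W) = s' := by simp [t]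
  have hφz := LinearEquiv.add_apply_eq_of_forall_sub_mem_ker_add_id hφF hφS (s := ⟨s, hs⟩)
    (by rw [add_sub_cancel_right]; exact hw.1)
  have hφy := LinearEquiv.add_apply_eq_of_forall_sub_mem_ker_add_id
    (LinearEquiv.symm_apply_comm hφF) (LinearEquiv.symm_sub_mem_ker_add_id hφF hφS)
    (s := ⟨s', hs'⟩) (by rw [add_sub_cancel_right]; exact hw'.1)
  dsimp only at hφz hφy
  suffices 2 * g (φ (w + s)) (w' + s') = 0 by linarith
  calc 2 * g (φ (w + s)) (w' + s')
      = g (f ⟨s, hs⟩ + F (f ⟨s, hs⟩)) (w' + s') + g (t + F t) (w + s) := by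
        rw [two_mul_apply_eq hFF hgF, hφz, ← φ.apply_symm_apply (w' + s' + F (w' + s')), hφg,
          map_add φ.symm, LinearEquiv.symm_apply_comm hφF, hφy, hsymm (w + s)]
    _ = g (F (f ⟨s, hs⟩)) (f t) + g (F t) s := by
        rw [apply_add_apply_eq_of_isotropic hgF hL' (hSL' (f _).2) hy (hSL' hs')
            (by rw [add_sub_cancel_right]; exact hw'.1),
          apply_add_apply_eq_of_isotropic hgF hL (hSL t.2) hz (hSL hs)
            (by rw [add_sub_cancel_right]; exact hw.1), hft]
    _ = 0 := by
        rw [hf, add_eq_zero_iff_eq_neg]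
        exact ((isAlt_comp hsymm hFF hgF).neg (t : W) s).symm

end ParaHermitian

open ParaHermitian

/-- The para-Hermitian group `pH(W)` (the `g`-orthogonal transformations commuting with
`F`) acts transitively on the set of Dirac subspaces `L` of a para-Hermitian space `W`
with prescribed invariants `k = dim(W₋ ∩ L)` and `r = rank(ω|_L)` (equivalently, with
prescribed dimension of `ker(ω|_L) = L ∩ F(L)`, `ω(x,y) = g(Fx,y)`). -/
theorem paraHermitian_group_transitive_on_dirac
    {W : Type*} [AddCommGroup W] [Module ℝ W] [FiniteDimensional ℝ W] (n : ℕ)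
    (hdim : finrank ℝ W = 2 * n)
    (g : W →ₗ[ℝ] W →ₗ[ℝ] ℝ)
    (hsymm : ∀ x y, g x y = g y x)
    (hnondeg : ∀ x, (∀ y, g x y = 0) → x = 0)
    (F : W →ₗ[ℝ] W)
    (hFF : ∀ x, F (F x) = x)
    (hgF : ∀ x y, g (F x) (F y) = - g x y)
    (Wm : Submodule ℝ W)
    (hWm : Wm = LinearMap.ker (F + LinearMap.id))
    (L L' : Submodule ℝ W)
    (hiso : ∀ x ∈ L, ∀ y ∈ L, g x y = 0) (hLdim : finrank ℝ L = n)
    (hiso' : ∀ x ∈ L', ∀ y ∈ L', g x y = 0) (hLdim' : finrank ℝ L' = n)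
    -- the invariant `k = dim(W₋ ∩ L)` agrees:
    (hk : finrank ℝ (Wm ⊓ L : Submodule ℝ W) = finrank ℝ (Wm ⊓ L' : Submodule ℝ W))
    -- the invariant `r = rank(ω|_L) = n − dim ker(ω|_L)` agrees:
    (hr : finrank ℝ (L ⊓ (⨅ y ∈ L, LinearMap.ker ((g.flip y).comp F)) : Submodule ℝ W)
        = finrank ℝ (L' ⊓ (⨅ y ∈ L', LinearMap.ker ((g.flip y).comp F)) : Submodule ℝ W)) :
    ∃ φ : W ≃ₗ[ℝ] W,
      (∀ x y, g (φ x) (φ y) = g x y) ∧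
      (∀ x, φ (F x) = F (φ x)) ∧
      Submodule.map (φ : W →ₗ[ℝ] W) L = L' := by
  subst hWm
  have hω := isAlt_comp hsymm hFF hgF
  obtain ⟨S, hS_disj, hS, hS_dim, hS_ker⟩ := exists_complement_inf_ker_add_id hsymm hFF hgF hiso
  obtain ⟨S', hS_disj', hS', hS_dim', hS_ker'⟩ :=
    exists_complement_inf_ker_add_id hsymm hFF hgF hiso'
  obtain ⟨f, hf⟩ := IsAlt.exists_isometry_of_finrank_ker_eq
    (B := (g ∘ₗ F).compl₁₂ S.subtype S.subtype) (B' := (g ∘ₗ F).compl₁₂ S'.subtype S'.subtype)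
    (fun c => hω c) (fun c => hω c) (by omega) (by omega)
  obtain ⟨φ, hφg, hφF, hφS⟩ :=
    exists_paraHermitian_sub_mem_ker_add_id hnondeg hsymm hFF hgF hS_disj hS_disj' f
  have hφL : finrank ℝ (L.map (φ : W →ₗ[ℝ] W)) = finrank ℝ L' := by
    rw [LinearEquiv.finrank_map_eq, hLdim, hLdim']
  refine ⟨φ, hφg, hφF, eq_of_le_of_finrank_eq ?_ hφL⟩
  rintro _ ⟨z, hz, rfl⟩
  rw [← LinearMap.BilinForm.orthogonal_eq_self_of_isotropic_s19 hnondeg hiso' (by omega)]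
  refine LinearMap.BilinForm.mem_orthogonal_iff.mpr fun y hy => ?_
  rw [hsymm]
  exact apply_eq_zero_of_sub_mem_ker_add_id hsymm hFF hgF hiso hiso' hS hS' f hf φ hφg hφF hφS hz hy
end
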